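/- Let X be a nonempty closed L-pseudo-Lipschitz subset of the pseudo-Euclidean space ℝ_{(l,p)} with L < 1. Then the multifunction m is locally bounded (for every a ∈ ℝ^n there are a neighbourhood U of a and R > 0 with m(x) contained in the Euclidean ball of radius R for all x ∈ U) and upper semicontinuous: whenever x_ν → a and y_ν ∈ m(x_ν) with y_ν → y, one has y ∈ m(a); moreover every point of m(a) is such a limit, i.e. limsup_{x→a} m(x) = m(a). -/

import Mathlib

open Filter Topology Set

noncomputable section

/-- The pseudo-Euclidean space `ℝ_{(l,p)}`: `ℝ^(l+p)` with the Euclidean topology. -/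
abbrev PE (l p : ℕ) := EuclideanSpace ℝ (Fin (l + p))

/-- The quadratic form `Q(x) = ‖x‖_l² − ‖x‖_p²`. -/
def Q (l p : ℕ) (x : PE l p) : ℝ :=
  ∑ i : Fin (l + p), if (i : ℕ) < l then (x i) ^ 2 else -((x i) ^ 2)

/-- The pseudo-scalar product `⟪x,y⟫ = Σ_{i<l} x_i y_i − Σ_{i≥l} x_i y_i`. -/
def pseudoInner (l p : ℕ) (x y : PE l p) : ℝ :=
  ∑ i : Fin (l + p), if (i : ℕ) < l then x i * y i else -(x i * y i)

/-- `‖x‖_l`: the Euclidean norm of the first `l` coordinates. -/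
def normL (l p : ℕ) (x : PE l p) : ℝ :=
  Real.sqrt (∑ i : Fin (l + p), if (i : ℕ) < l then (x i) ^ 2 else 0)

/-- `‖x‖_p`: the Euclidean norm of the last `p` coordinates. -/
def normP (l p : ℕ) (x : PE l p) : ℝ :=
  Real.sqrt (∑ i : Fin (l + p), if (i : ℕ) < l then 0 else (x i) ^ 2)

/-- `X` is acausal: `Q(x−y) > 0` for all distinct `x, y ∈ X`. -/
def Acausal (l p : ℕ) (X : Set (PE l p)) : Prop :=
  ∀ x ∈ X, ∀ y ∈ X, x ≠ y → 0 < Q l p (x - y)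

/-- `X` is `L`-pseudo-Lipschitz: `L‖x−y‖_l ≥ ‖x−y‖_p` for all `x, y ∈ X`. -/
def PseudoLipschitz (l p : ℕ) (L : ℝ) (X : Set (PE l p)) : Prop :=
  ∀ x ∈ X, ∀ y ∈ X, normP l p (x - y) ≤ L * normL l p (x - y)

/-- The squared-distance function `ρ(a,X) = inf {Q(x−a) : x ∈ X}`. -/
def rho (l p : ℕ) (X : Set (PE l p)) (a : PE l p) : ℝ :=
  sInf ((fun x => Q l p (x - a)) '' X)

/-- The set of closest points `m(a) = {x ∈ X : Q(x−a) = ρ(a,X)}`, via its equivalent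
description `m(a) = {x ∈ X : ∀ b ∈ X, Q(x−a) ≤ Q(b−a)}`. -/
def mm (l p : ℕ) (X : Set (PE l p)) (a : PE l p) : Set (PE l p) :=
  {x ∈ X | ∀ b ∈ X, Q l p (x - a) ≤ Q l p (b - a)}

/-- The medial axis `M_X`: points with at least two closest points in `X`. -/
def medialAxis (l p : ℕ) (X : Set (PE l p)) : Set (PE l p) :=
  {a | (mm l p X a).Nontrivial}

/-- The vacant axis `W_X`: points with no closest point in `X`. -/
def vacantAxis (l p : ℕ) (X : Set (PE l p)) : Set (PE l p) :=
  {a | mm l p X a = ∅}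

/-- The normal set `N(a) = {x : a ∈ m(x)}`. -/
def NN (l p : ℕ) (X : Set (PE l p)) (a : PE l p) : Set (PE l p) :=
  {x | a ∈ mm l p X x}

/-- The strict normal set `N'(a) = {x : m(x) = {a}}`. -/
def NN' (l p : ℕ) (X : Set (PE l p)) (a : PE l p) : Set (PE l p) :=
  {x | mm l p X x = {a}}

/-! If `y` is a closest point to `x` and `b ∈ X`, write `t`, `s` for the `l`- and `p`-norms of
`y - x`. Minimality gives `t² - s² = Q(y - x) ≤ Q(b - x) ≤ ‖b - x‖²`, and the pseudo-Lipschitz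
condition applied to `y` and `b` gives `s ≤ L t + 2‖b - x‖`. Together `t ≤ L t + 3‖b - x‖`, so for
`L < 1` the closest points to `x` lie within `6‖b - x‖ / (1 - L)` of `x`, uniformly for `x` near a
given point. Upper semicontinuity only needs continuity of `Q` and closedness of `X`. -/

section PseudoEuclidean

variable {l p : ℕ}

def projL (l p : ℕ) (x : PE l p) : PE l p :=
  WithLp.toLp 2 fun i => if (i : ℕ) < l then x i else 0

def projP (l p : ℕ) (x : PE l p) : PE l p :=
  WithLp.toLp 2 fun i => if (i : ℕ) < l then 0 else x i

lemma projL_sub (x y : PE l p) : projL l p (x - y) = projL l p x - projL l p y := by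
  ext i; by_cases h : (i : ℕ) < l <;> simp [projL, h]

lemma projP_sub (x y : PE l p) : projP l p (x - y) = projP l p x - projP l p y := by
  ext i; by_cases h : (i : ℕ) < l <;> simp [projP, h]

lemma norm_projL (x : PE l p) : ‖projL l p x‖ = normL l p x := by
  rw [EuclideanSpace.norm_eq, normL]
  congr 1
  refine Finset.sum_congr rfl fun i _ => ?_
  by_cases h : (i : ℕ) < l <;> simp [projL, h]

lemma norm_projP (x : PE l p) : ‖projP l p x‖ = normP l p x := by
  rw [EuclideanSpace.norm_eq, normP]
  congr 1
  refine Finset.sum_congr rfl fun i _ => ?_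
  by_cases h : (i : ℕ) < l <;> simp [projP, h]

lemma normL_nonneg (x : PE l p) : 0 ≤ normL l p x := Real.sqrt_nonneg _

lemma normP_nonneg (x : PE l p) : 0 ≤ normP l p x := Real.sqrt_nonneg _

lemma normL_sub_le (x y z : PE l p) :
    normL l p (x - z) ≤ normL l p (x - y) + normL l p (y - z) := by
  simp only [← norm_projL, projL_sub]
  exact norm_sub_le_norm_sub_add_norm_sub _ _ _

lemma normP_sub_le (x y z : PE l p) :
    normP l p (x - z) ≤ normP l p (x - y) + normP l p (y - z) := by
  simp only [← norm_projP, projP_sub]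
  exact norm_sub_le_norm_sub_add_norm_sub _ _ _

lemma sq_normL (x : PE l p) :
    normL l p x ^ 2 = ∑ i : Fin (l + p), if (i : ℕ) < l then x i ^ 2 else 0 := by
  rw [normL, Real.sq_sqrt]
  exact Finset.sum_nonneg fun i _ => by split <;> positivity

lemma sq_normP (x : PE l p) :
    normP l p x ^ 2 = ∑ i : Fin (l + p), if (i : ℕ) < l then 0 else x i ^ 2 := by
  rw [normP, Real.sq_sqrt]
  exact Finset.sum_nonneg fun i _ => by split <;> positivity

lemma Q_eq_sq_normL_sub_sq_normP (x : PE l p) :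
    Q l p x = normL l p x ^ 2 - normP l p x ^ 2 := by
  rw [sq_normL, sq_normP, Q, ← Finset.sum_sub_distrib]
  refine Finset.sum_congr rfl fun i _ => ?_
  by_cases h : (i : ℕ) < l <;> simp [h]

lemma sq_norm_eq_sq_normL_add_sq_normP (x : PE l p) :
    ‖x‖ ^ 2 = normL l p x ^ 2 + normP l p x ^ 2 := by
  rw [sq_normL, sq_normP, EuclideanSpace.norm_eq, Real.sq_sqrt (by positivity),
    ← Finset.sum_add_distrib]
  refine Finset.sum_congr rfl fun i _ => ?_
  by_cases h : (i : ℕ) < l <;> simp [h]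

lemma normL_le_norm (x : PE l p) : normL l p x ≤ ‖x‖ := by
  have := sq_norm_eq_sq_normL_add_sq_normP x
  nlinarith [normL_nonneg x, norm_nonneg x]

lemma normP_le_norm (x : PE l p) : normP l p x ≤ ‖x‖ := by
  have := sq_norm_eq_sq_normL_add_sq_normP x
  nlinarith [normP_nonneg x, norm_nonneg x]

lemma norm_le_normL_add_normP (x : PE l p) : ‖x‖ ≤ normL l p x + normP l p x := by
  have := sq_norm_eq_sq_normL_add_sq_normP x
  nlinarith [normL_nonneg x, normP_nonneg x, norm_nonneg x]

lemma Q_le_sq_norm (x : PE l p) : Q l p x ≤ ‖x‖ ^ 2 := by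
  rw [Q_eq_sq_normL_sub_sq_normP, sq_norm_eq_sq_normL_add_sq_normP]
  nlinarith [sq_nonneg (normP l p x)]

lemma continuous_Q : Continuous (Q l p) := by
  refine continuous_finsetSum _ fun i _ => ?_
  split_ifs <;> fun_prop

lemma PseudoLipschitz.mono {L L' : ℝ} {X : Set (PE l p)} (h : PseudoLipschitz l p L X)
    (hLL' : L ≤ L') : PseudoLipschitz l p L' X :=
  fun x hx y hy => (h x hx y hy).trans (mul_le_mul_of_nonneg_right hLL' (normL_nonneg _))

lemma mm_subset_closedBall {L : ℝ} (hL0 : 0 ≤ L) (hL1 : L < 1) {X : Set (PE l p)}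
    (hlip : PseudoLipschitz l p L X) {b : PE l p} (hb : b ∈ X) (x : PE l p) :
    mm l p X x ⊆ Metric.closedBall x (6 * ‖b - x‖ / (1 - L)) := by
  rintro y ⟨hyX, hymin⟩
  set t := normL l p (y - x)
  set s := normP l p (y - x)
  set K := ‖b - x‖
  have hQ : t ^ 2 - s ^ 2 ≤ K ^ 2 := by
    rw [← Q_eq_sq_normL_sub_sq_normP]
    exact (hymin b hb).trans (Q_le_sq_norm _)
  have hs : s ≤ L * t + 2 * K := calc
    s ≤ normP l p (y - b) + normP l p (b - x) := normP_sub_le _ _ _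
    _ ≤ L * normL l p (y - b) + K := add_le_add (hlip y hyX b hb) (normP_le_norm _)
    _ ≤ L * (t + K) + K := by
      gcongr
      calc normL l p (y - b) ≤ t + normL l p (x - b) := normL_sub_le _ _ _
        _ ≤ t + K := by grw [normL_le_norm, norm_sub_rev]
    _ ≤ L * t + 2 * K := by nlinarith [norm_nonneg (b - x)]
  -- `t² ≤ K² + s² ≤ (K + (L t + 2K))²`
  have ht : t ≤ L * t + 3 * K := by
    nlinarith [normL_nonneg (y - x), normP_nonneg (y - x), norm_nonneg (b - x)]
  rw [Metric.mem_closedBall, dist_eq_norm, le_div_iff₀ (by linarith)]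
  nlinarith [norm_le_normL_add_normP (y - x), norm_nonneg (b - x), normL_nonneg (y - x)]

lemma mm_subset_ball_of_mem_ball {L : ℝ} (hL0 : 0 ≤ L) (hL1 : L < 1) {X : Set (PE l p)}
    (hlip : PseudoLipschitz l p L X) {b : PE l p} (hb : b ∈ X) {a x : PE l p} {r : ℝ}
    (hx : x ∈ Metric.ball a r) :
    mm l p X x ⊆ Metric.ball 0 (‖a‖ + r + 6 * (‖b - a‖ + r) / (1 - L)) := by
  intro y hy
  have hxa : ‖x - a‖ < r := by rwa [← dist_eq_norm]
  have hyx : ‖y - x‖ ≤ 6 * ‖b - x‖ / (1 - L) := by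
    simpa [dist_eq_norm] using mm_subset_closedBall hL0 hL1 hlip hb x hy
  have hbx : ‖b - x‖ ≤ ‖b - a‖ + r := by
    linarith [norm_sub_le_norm_sub_add_norm_sub b a x, norm_sub_rev a x]
  rw [mem_ball_zero_iff]
  calc ‖y‖ ≤ ‖x‖ + ‖y - x‖ := norm_le_norm_add_norm_sub' y x
    _ < ‖a‖ + r + 6 * (‖b - a‖ + r) / (1 - L) := by
      refine add_lt_add_of_lt_of_le (by linarith [norm_le_norm_add_norm_sub' x a]) ?_
      grw [hyx, hbx]
      linarith

lemma mem_mm_of_tendsto {X : Set (PE l p)} (hX : IsClosed X) {a y₀ : PE l p}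
    {x y : ℕ → PE l p} (hx : Tendsto x atTop (𝓝 a)) (hy : ∀ ν, y ν ∈ mm l p X (x ν))
    (hy₀ : Tendsto y atTop (𝓝 y₀)) : y₀ ∈ mm l p X a := by
  refine ⟨hX.mem_of_tendsto hy₀ (.of_forall fun ν => (hy ν).1), fun c hc => ?_⟩
  exact le_of_tendsto_of_tendsto' ((continuous_Q.tendsto _).comp (hy₀.sub hx))
    ((continuous_Q.tendsto _).comp (tendsto_const_nhds.sub hx)) fun ν => (hy ν).2 c hc

end PseudoEuclidean

theorem m_locallyBounded_usc_general (l p : ℕ) (L : ℝ) (hL : L < 1)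
    (X : Set (PE l p)) (hne : X.Nonempty) (hX : IsClosed X)
    (hlip : PseudoLipschitz l p L X) :
    (∀ a : PE l p, ∃ U ∈ 𝓝 a, ∃ R > (0:ℝ), ∀ x ∈ U, mm l p X x ⊆ Metric.ball (0 : PE l p) R) ∧
    (∀ (a : PE l p) (x : ℕ → PE l p) (y : ℕ → PE l p) (y₀ : PE l p),
      Tendsto x atTop (𝓝 a) → (∀ ν, y ν ∈ mm l p X (x ν)) → Tendsto y atTop (𝓝 y₀) →
      y₀ ∈ mm l p X a) ∧
    (∀ (a : PE l p), ∀ y₀ ∈ mm l p X a, ∃ (x : ℕ → PE l p) (y : ℕ → PE l p),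
      Tendsto x atTop (𝓝 a) ∧ (∀ ν, y ν ∈ mm l p X (x ν)) ∧ Tendsto y atTop (𝓝 y₀)) := by
  obtain ⟨b, hb⟩ := hne
  have hL₀ : max L 0 < 1 := max_lt hL one_pos
  have hlip₀ := hlip.mono (le_max_left L 0)
  refine ⟨fun a => ?_, fun a x y y₀ hx hy hy₀ => mem_mm_of_tendsto hX hx hy hy₀,
    fun a y₀ hy₀ => ⟨fun _ => a, fun _ => y₀, tendsto_const_nhds, fun _ => hy₀,
      tendsto_const_nhds⟩⟩
  have hR : 0 < ‖a‖ + 1 + 6 * (‖b - a‖ + 1) / (1 - max L 0) :=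
    add_pos_of_pos_of_nonneg (by positivity) (div_nonneg (by positivity) (by linarith))
  exact ⟨Metric.ball a 1, Metric.ball_mem_nhds a one_pos, _, hR,
    fun x hx => mm_subset_ball_of_mem_ball (le_max_right L 0) hL₀ hlip₀ hb hx⟩

/-- For nonempty closed `L`-pseudo-Lipschitz `X` with `L < 1`, the multifunction
`m` is locally bounded and upper semicontinuous, with `limsup_{x→a} m(x) = m(a)`. -/
theorem m_locallyBounded_usc (l p : ℕ) (hl : 1 ≤ l) (L : ℝ) (hL : L < 1)
    (X : Set (PE l p)) (hne : X.Nonempty) (hX : IsClosed X)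
    (hlip : PseudoLipschitz l p L X) :
    (∀ a : PE l p, ∃ U ∈ 𝓝 a, ∃ R > (0:ℝ), ∀ x ∈ U, mm l p X x ⊆ Metric.ball (0 : PE l p) R) ∧
    (∀ (a : PE l p) (x : ℕ → PE l p) (y : ℕ → PE l p) (y₀ : PE l p),
      Tendsto x atTop (𝓝 a) → (∀ ν, y ν ∈ mm l p X (x ν)) → Tendsto y atTop (𝓝 y₀) →
      y₀ ∈ mm l p X a) ∧
    (∀ (a : PE l p), ∀ y₀ ∈ mm l p X a, ∃ (x : ℕ → PE l p) (y : ℕ → PE l p),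
      Tendsto x atTop (𝓝 a) ∧ (∀ ν, y ν ∈ mm l p X (x ν)) ∧ Tendsto y atTop (𝓝 y₀)) :=
  m_locallyBounded_usc_general l p L hL X hne hX hlip
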